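/- Let (Ā, B̄) be a stabilizable pair of real matrices and let P̄ be the unique symmetric positive definite solution of the algebraic Riccati equation Āᵀ P̄ + P̄ Ā − P̄ B̄ B̄ᵀ P̄ + I = 0. If K̄ = σ⁻¹ B̄ᵀ P̄ with 0 < σ ≤ min_{i≥2} Re(λ_i(L)), then the matrix Ā − λ_i(L) B̄ K̄ is Hurwitz (all eigenvalues have negative real part) for every i ∈ {2,...,N}. -/

import Mathlib

/-!
Let `v` be an eigenvector of `M = A - c • B Bᴴ P` for the eigenvalue `μ`. The Riccati equation
rewrites `Mᴴ P + P M` as `-(1 + (2 Re c - 1) (P B)(P B)ᴴ)`, which is negative definite as soon as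
`Re c ≥ 1/2`; evaluating this Lyapunov identity at `v` gives `2 Re μ · v*Pv < 0`, hence `Re μ < 0`.
The closed loop of the theorem is of this form with `c = λᵢ / σ`, and `Re c ≥ 1` by the choice
of `σ`.
-/

open scoped Matrix

/-- A (possibly complex) square matrix is Hurwitz if every eigenvalue has
negative real part. -/
def IsHurwitz {n : ℕ} (M : Matrix (Fin n) (Fin n) ℂ) : Prop :=
  ∀ μ ∈ spectrum ℂ M, μ.re < 0

open scoped ComplexOrder

namespace Matrix

variable {l m n : Type*} [Fintype m] [Fintype n]

omit [Fintype n] in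
theorem map_ofReal_mul (X : Matrix l m ℝ) (Y : Matrix m n ℝ) :
    (X * Y).map Complex.ofReal = X.map Complex.ofReal * Y.map Complex.ofReal :=
  Matrix.map_mul (f := Complex.ofRealHom)

omit [Fintype m] [Fintype n] in
theorem map_ofReal_conjTranspose (X : Matrix m n ℝ) :
    (X.map Complex.ofReal)ᴴ = Xᵀ.map Complex.ofReal := by
  rw [← conjTranspose_map _ fun x => (Complex.conj_ofReal x).symm,
    conjTranspose_eq_transpose_of_trivial]

theorem PosDef.map_ofReal {P : Matrix n n ℝ} (hP : P.PosDef) : (P.map Complex.ofReal).PosDef := by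
  have hherm : (P.map Complex.ofReal).IsHermitian :=
    hP.isHermitian.map _ fun x => (Complex.conj_ofReal x).symm
  refine PosDef.of_dotProduct_mulVec_pos hherm fun v hv => ?_
  set a : n → ℝ := fun j => (v j).re
  set b : n → ℝ := fun j => (v j).im
  have hre : (star v ⬝ᵥ (P.map Complex.ofReal *ᵥ v)).re = a ⬝ᵥ (P *ᵥ a) + b ⬝ᵥ (P *ᵥ b) := by
    simp only [dotProduct, mulVec, map_apply, Pi.star_apply, Complex.re_sum, Finset.mul_sum,
      ← Finset.sum_add_distrib, Complex.mul_re, Complex.mul_im, Complex.ofReal_re,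
      Complex.ofReal_im, RCLike.star_def, Complex.conj_re, Complex.conj_im, a, b]
    refine Finset.sum_congr rfl fun j _ => Finset.sum_congr rfl fun k _ => ?_
    ring
  have hab : a ≠ 0 ∨ b ≠ 0 := by
    by_contra! h
    exact hv (funext fun j => Complex.ext (congrFun h.1 j) (congrFun h.2 j))
  refine Complex.lt_def.mpr ⟨?_, (hherm.im_star_dotProduct_mulVec_self v).symm⟩
  rw [Complex.zero_re, hre]
  rcases hab with ha | hb
  · exact add_pos_of_pos_of_nonneg (hP.dotProduct_mulVec_pos ha)
      (hP.posSemidef.dotProduct_mulVec_nonneg b)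
  · exact add_pos_of_nonneg_of_pos (hP.posSemidef.dotProduct_mulVec_nonneg a)
      (hP.dotProduct_mulVec_pos hb)

theorem exists_mulVec_eq_smul_of_mem_spectrum {K : Type*} [Field K] [DecidableEq n]
    {M : Matrix n n K} {μ : K} (hμ : μ ∈ spectrum K M) : ∃ v ≠ 0, M *ᵥ v = μ • v := by
  rw [← spectrum_toLin', ← Module.End.hasEigenvalue_iff_mem_spectrum] at hμ
  obtain ⟨v, hv⟩ := hμ.exists_hasEigenvector
  exact ⟨v, hv.2, hv.apply_eq_smul⟩

end Matrix

open Matrix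

theorem isHurwitz_of_lyapunov {k : ℕ} {M P Q : Matrix (Fin k) (Fin k) ℂ} (hP : P.PosDef)
    (hQ : Q.PosDef) (hlyap : Mᴴ * P + P * M = -Q) : IsHurwitz M := by
  intro μ hμ
  obtain ⟨v, hv0, hv⟩ := exists_mulVec_eq_smul_of_mem_spectrum hμ
  have hadj : star v ⬝ᵥ (Mᴴ *ᵥ (P *ᵥ v)) = star μ * (star v ⬝ᵥ (P *ᵥ v)) := by
    rw [dotProduct_mulVec, ← star_mulVec, hv, star_smul, smul_dotProduct, smul_eq_mul]
  have hform : star v ⬝ᵥ ((Mᴴ * P + P * M) *ᵥ v) = (2 * μ.re : ℝ) * (star v ⬝ᵥ (P *ᵥ v)) := by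
    rw [add_mulVec, dotProduct_add, ← mulVec_mulVec, ← mulVec_mulVec, hadj, hv, mulVec_smul,
      dotProduct_smul, smul_eq_mul, ← add_mul, add_comm, ← Complex.add_conj]
    rfl
  rw [hlyap, neg_mulVec, dotProduct_neg] at hform
  by_contra! hre
  have hnonneg : 0 ≤ ((2 * μ.re : ℝ) : ℂ) * (star v ⬝ᵥ (P *ᵥ v)) :=
    mul_nonneg (Complex.zero_le_real.mpr (by linarith)) (hP.dotProduct_mulVec_pos hv0).le
  rw [← hform, neg_nonneg] at hnonneg
  exact (hQ.dotProduct_mulVec_pos hv0).not_ge hnonneg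

theorem closedLoop_lyapunov_of_riccati {n m : Type*} [Fintype n] [DecidableEq n] [Fintype m]
    {A P : Matrix n n ℂ} {B : Matrix n m ℂ} (hP : Pᴴ = P)
    (hare : Aᴴ * P + P * A - P * B * Bᴴ * P + 1 = 0) (c : ℂ) :
    (A - c • (B * Bᴴ * P))ᴴ * P + P * (A - c • (B * Bᴴ * P))
      = -(1 + ((2 * c.re - 1 : ℝ) : ℂ) • (P * B * (P * B)ᴴ)) := by
  have hPB : P * B * (P * B)ᴴ = P * B * Bᴴ * P := by
    rw [conjTranspose_mul, hP, ← Matrix.mul_assoc]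
  rw [hPB, Complex.ofReal_sub, ← Complex.add_conj, Complex.ofReal_one, conjTranspose_sub,
    conjTranspose_smul, conjTranspose_mul, conjTranspose_mul, conjTranspose_conjTranspose, hP,
    Matrix.sub_mul, Matrix.mul_sub, Matrix.smul_mul, Matrix.mul_smul]
  simp only [Matrix.mul_assoc, Complex.star_def] at hare ⊢
  linear_combination (norm := module) hare

theorem isHurwitz_sub_smul_of_riccati {k l : ℕ} {A P : Matrix (Fin k) (Fin k) ℂ}
    {B : Matrix (Fin k) (Fin l) ℂ} (hP : P.PosDef)
    (hare : Aᴴ * P + P * A - P * B * Bᴴ * P + 1 = 0) {c : ℂ} (hc : 1 / 2 ≤ c.re) :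
    IsHurwitz (A - c • (B * Bᴴ * P)) :=
  isHurwitz_of_lyapunov hP
    (PosDef.one.add_posSemidef <| (posSemidef_self_mul_conjTranspose _).smul <|
      Complex.zero_le_real.mpr (by linarith))
    (closedLoop_lyapunov_of_riccati hP.isHermitian hare c)

theorem stmt_2_general {nb mb N : ℕ}
    (Abar : Matrix (Fin nb) (Fin nb) ℝ) (Bbar : Matrix (Fin nb) (Fin mb) ℝ)
    -- P̄ symmetric positive definite solution of the ARE
    (Pbar : Matrix (Fin nb) (Fin nb) ℝ) (hP : Pbar.PosDef)
    (hare : Abarᵀ * Pbar + Pbar * Abar - Pbar * Bbar * Bbarᵀ * Pbar + 1 = 0)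
    -- eigenvalues of the Laplacian L: λ 0 = 0, Re λ i > 0 for i ≠ 0
    (lam : Fin N → ℂ)
    (hN : 0 < N)
    -- the gain K̄ = σ⁻¹ B̄ᵀ P̄ with 0 < σ ≤ min_{i≥2} Re λ_i
    (σ : ℝ) (hσ : 0 < σ) (hσle : ∀ i, i ≠ ⟨0, hN⟩ → σ ≤ (lam i).re)
    (Kbar : Matrix (Fin mb) (Fin nb) ℝ) (hK : Kbar = σ⁻¹ • (Bbarᵀ * Pbar)) :
    ∀ i, i ≠ (⟨0, hN⟩ : Fin N) →
      IsHurwitz ((Abar.map Complex.ofReal) - lam i • ((Bbar * Kbar).map Complex.ofReal)) := by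
  intro i hi
  set A := Abar.map Complex.ofReal
  set B := Bbar.map Complex.ofReal
  set P := Pbar.map Complex.ofReal
  have hareC : Aᴴ * P + P * A - P * B * Bᴴ * P + 1 = 0 := by
    simpa [A, B, P, map_ofReal_conjTranspose, ← map_ofReal_mul, Matrix.map_add,
      Matrix.map_sub] using congrArg (Matrix.map · Complex.ofReal) hare
  have hgain : (Bbar * Kbar).map Complex.ofReal = (σ⁻¹ : ℂ) • (B * Bᴴ * P) := by
    rw [hK, Matrix.mul_smul, Matrix.map_smulₛₗ _ Complex.ofReal _ fun x => Complex.ofReal_mul _ x,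
      Complex.ofReal_inv, map_ofReal_conjTranspose, ← map_ofReal_mul, ← map_ofReal_mul,
      Matrix.mul_assoc]
  have hc : 1 / 2 ≤ (lam i * (σ⁻¹ : ℂ)).re := by
    rw [← Complex.ofReal_inv, Complex.re_mul_ofReal, ← div_eq_mul_inv, le_div_iff₀ hσ]
    linarith [hσle i hi]
  rw [hgain, smul_smul]
  exact isHurwitz_sub_smul_of_riccati hP.map_ofReal hareC hc

/-- Lemma 1: synchronization gain from the ARE renders
Ā − λ_i(L) B̄ K̄ Hurwitz for all i ≥ 2. -/
theorem stmt_2 {nb mb N : ℕ}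
    (Abar : Matrix (Fin nb) (Fin nb) ℝ) (Bbar : Matrix (Fin nb) (Fin mb) ℝ)
    -- (Ā, B̄) stabilizable
    (hstab : ∃ K : Matrix (Fin mb) (Fin nb) ℝ,
      IsHurwitz ((Abar - Bbar * K).map Complex.ofReal))
    -- P̄ symmetric positive definite solution of the ARE
    (Pbar : Matrix (Fin nb) (Fin nb) ℝ) (hP : Pbar.PosDef)
    (hare : Abarᵀ * Pbar + Pbar * Abar - Pbar * Bbar * Bbarᵀ * Pbar + 1 = 0)
    -- eigenvalues of the Laplacian L: λ 0 = 0, Re λ i > 0 for i ≠ 0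
    (L : Matrix (Fin N) (Fin N) ℝ) (lam : Fin N → ℂ)
    (hlam : ∀ i, lam i ∈ spectrum ℂ (L.map Complex.ofReal))
    (hN : 0 < N) (h0 : lam ⟨0, hN⟩ = 0)
    (hpos : ∀ i, i ≠ ⟨0, hN⟩ → 0 < (lam i).re)
    -- the gain K̄ = σ⁻¹ B̄ᵀ P̄ with 0 < σ ≤ min_{i≥2} Re λ_i
    (σ : ℝ) (hσ : 0 < σ) (hσle : ∀ i, i ≠ ⟨0, hN⟩ → σ ≤ (lam i).re)
    (Kbar : Matrix (Fin mb) (Fin nb) ℝ) (hK : Kbar = σ⁻¹ • (Bbarᵀ * Pbar)) :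
    ∀ i, i ≠ (⟨0, hN⟩ : Fin N) →
      IsHurwitz ((Abar.map Complex.ofReal) - lam i • ((Bbar * Kbar).map Complex.ofReal)) :=
  stmt_2_general Abar Bbar Pbar hP hare lam hN σ hσ hσle Kbar hK
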